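/- arXiv:1503.04079 — 2 statements merged into one kernel-verified Lean document; each statement's English description precedes it below -/
import Mathlib

section
/- There exist absolute constants c₁, c₂ > 0 such that for every nonnegative measurable function h on (0,∞) and every x > 0, c₁ · U(x) · ∫₀^∞ h(t) U(t) / (U(x) + U(t)) dt ≤ ∫₀ˣ (∫_t^∞ h(s) ds) u(t) dt ≤ c₂ · U(x) · ∫₀^∞ h(t) U(t) / (U(x) + U(t)) dt. -/
open MeasureTheory ENNReal Set
open scoped ENNReal

noncomputable def Uint (u : ℝ → ℝ≥0∞) (x : ℝ) : ℝ≥0∞ := ∫⁻ t in Ioc (0:ℝ) x, u t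

lemma Uint_mono (u : ℝ → ℝ≥0∞) : Monotone (Uint u) := fun a b hab =>
  lintegral_mono_set (Ioc_subset_Ioc le_rfl hab)

lemma Uint_nonpos (u : ℝ → ℝ≥0∞) {y : ℝ} (hy : y ≤ 0) : Uint u y = 0 := by
  unfold Uint
  rw [Ioc_eq_empty (by simpa using not_lt.mpr hy)]
  simp

lemma harm_le_min (a b : ℝ≥0∞) : a * b / (a + b) ≤ min a b := by
  refine le_min ?_ ?_
  · exact ENNReal.div_le_of_le_mul (mul_le_mul_right le_add_self a)
  · refine ENNReal.div_le_of_le_mul ?_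
    rw [mul_comm]
    exact mul_le_mul_right le_self_add b

lemma min_le_harm (a b : ℝ≥0∞) (ha : a ≠ ∞) (hb : b ≠ ∞) :
    min a b ≤ 2 * (a * b / (a + b)) := by
  rcases eq_or_ne (a + b) 0 with h0 | h0
  · rcases add_eq_zero.mp h0 with ⟨rfl, rfl⟩
    simp
  · rw [← mul_div_assoc,
      ENNReal.le_div_iff_mul_le (Or.inl h0) (Or.inl (ENNReal.add_ne_top.mpr ⟨ha, hb⟩))]
    calc min a b * (a + b) = min a b * a + min a b * b := mul_add _ _ _
      _ ≤ b * a + a * b :=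
        add_le_add (mul_le_mul_left (min_le_right a b) a)
          (mul_le_mul_left (min_le_left a b) b)
      _ = 2 * (a * b) := by ring

lemma copson_key (u h : ℝ → ℝ≥0∞) (hu : Measurable u) (hh : Measurable h) (x : ℝ) :
    (∫⁻ t in Ioc (0:ℝ) x, (∫⁻ s in Ioi t, h s) * u t)
      = ∫⁻ s in Ioi (0:ℝ), h s * Uint u (min x s) := by
  set f : ℝ → ℝ → ℝ≥0∞ := fun t s => (Ioc (0:ℝ) x).indicator u t * (Ioi t).indicator h s
    with hf
  have hmeas : Measurable (Function.uncurry f) := by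
    have h1 : Measurable fun p : ℝ × ℝ => (Ioc (0:ℝ) x).indicator u p.1 :=
      (hu.indicator measurableSet_Ioc).comp measurable_fst
    have h2 : Measurable fun p : ℝ × ℝ => (Ioi p.1).indicator h p.2 := by
      have he : (fun p : ℝ × ℝ => (Ioi p.1).indicator h p.2)
          = {p : ℝ × ℝ | p.1 < p.2}.indicator (fun p => h p.2) := by
        funext p
        by_cases hp : p.1 < p.2 <;> simp [Set.indicator_apply, hp]
      rw [he]
      exact (hh.comp measurable_snd).indicator (measurableSet_lt measurable_fst measurable_snd)
    exact h1.mul h2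
  have lhs_eq : (∫⁻ t in Ioc (0:ℝ) x, (∫⁻ s in Ioi t, h s) * u t)
      = ∫⁻ t, ∫⁻ s, f t s := by
    rw [← lintegral_indicator measurableSet_Ioc _]
    congr 1
    funext t
    by_cases ht : t ∈ Ioc (0:ℝ) x
    · rw [Set.indicator_of_mem ht]
      simp only [hf, Set.indicator_of_mem ht]
      rw [mul_comm, ← lintegral_indicator measurableSet_Ioi h,
        ← lintegral_const_mul _ (hh.indicator measurableSet_Ioi)]
    · rw [Set.indicator_of_notMem ht]
      simp only [hf, Set.indicator_of_notMem ht, zero_mul, lintegral_zero]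
  have swap : (∫⁻ t, ∫⁻ s, f t s) = ∫⁻ s, ∫⁻ t, f t s :=
    lintegral_lintegral_swap hmeas.aemeasurable
  have inner : ∀ s, (∫⁻ t, f t s) = h s * Uint u (min x s) := by
    intro s
    have hfe : (fun t => f t s) = (Ioc (0:ℝ) x ∩ Iio s).indicator (fun t => u t * h s) := by
      funext t
      simp only [hf]
      by_cases h1 : t ∈ Ioc (0:ℝ) x <;> by_cases h2 : s ∈ Ioi t
      · rw [Set.indicator_of_mem h1, Set.indicator_of_mem h2,
          Set.indicator_of_mem (Set.mem_inter h1 (mem_Iio.mpr h2))]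
      · rw [Set.indicator_of_notMem h2, mul_zero,
          Set.indicator_of_notMem (fun hm => h2 hm.2)]
      · rw [Set.indicator_of_notMem h1, zero_mul,
          Set.indicator_of_notMem (fun hm => h1 hm.1)]
      · rw [Set.indicator_of_notMem h1, zero_mul,
          Set.indicator_of_notMem (fun hm => h1 hm.1)]
    rw [hfe, lintegral_indicator (measurableSet_Ioc.inter measurableSet_Iio) _,
      lintegral_mul_const _ hu]
    have hA : (∫⁻ t in Ioc (0:ℝ) x ∩ Iio s, u t) = Uint u (min x s) := by
      rcases le_or_gt s 0 with hs | hs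
      · have he : Ioc (0:ℝ) x ∩ Iio s = ∅ := by
          apply eq_empty_iff_forall_notMem.mpr
          rintro t ⟨⟨ht0, _⟩, hts⟩
          exact absurd (ht0.trans hts) (not_lt.mpr hs)
        rw [he, Uint_nonpos u ((min_le_right x s).trans hs)]
        simp
      · rcases le_or_gt s x with hsx | hxs
        · have he : Ioc (0:ℝ) x ∩ Iio s = Ioo 0 s := by
            ext t
            simp only [mem_inter_iff, mem_Ioc, mem_Iio, mem_Ioo]
            constructor
            · rintro ⟨⟨ht0, _⟩, hts⟩; exact ⟨ht0, hts⟩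
            · rintro ⟨ht0, hts⟩; exact ⟨⟨ht0, (hts.le.trans hsx)⟩, hts⟩
          rw [he, min_eq_right hsx]
          unfold Uint
          exact setLIntegral_congr Ioo_ae_eq_Ioc
        · have he : Ioc (0:ℝ) x ∩ Iio s = Ioc 0 x := by
            ext t
            simp only [mem_inter_iff, mem_Ioc, mem_Iio]
            exact ⟨fun ht => ht.1, fun ht => ⟨ht, ht.2.trans_lt hxs⟩⟩
          rw [he, min_eq_left hxs.le]
          rfl
    rw [hA, mul_comm]
  have rhs_eq : (∫⁻ s, h s * Uint u (min x s)) = ∫⁻ s in Ioi (0:ℝ), h s * Uint u (min x s) := by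
    rw [← lintegral_indicator measurableSet_Ioi _]
    congr 1
    funext s
    rcases le_or_gt s 0 with hs | hs
    · rw [Set.indicator_of_notMem (by simpa using hs),
        Uint_nonpos u ((min_le_right x s).trans hs), mul_zero]
    · rw [Set.indicator_of_mem (mem_Ioi.mpr hs)]
  rw [lhs_eq, swap, ← rhs_eq]
  congr 1
  funext s
  exact inner s

/-- `∫₀ˣ (∫_t^∞ h) u(t) dt ≈ U(x) · S(hU)(x)`, where `S` is the Stieltjes-type operator
with kernel `1/(U(x)+U(t))`, with absolute equivalence constants. -/
theorem copson_hardy_stieltjes (u : ℝ → ℝ≥0∞) (hu : Measurable u)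
    (hUfin : ∀ x > (0:ℝ), Uint u x < ∞) :
    ∃ c₁ c₂ : ℝ≥0∞, 0 < c₁ ∧ c₁ < ∞ ∧ 0 < c₂ ∧ c₂ < ∞ ∧
      ∀ h : ℝ → ℝ≥0∞, Measurable h → ∀ x > (0:ℝ),
        c₁ * Uint u x * (∫⁻ t in Ioi (0:ℝ), h t * Uint u t / (Uint u x + Uint u t))
            ≤ (∫⁻ t in Ioc (0:ℝ) x, (∫⁻ s in Ioi t, h s) * u t) ∧
        (∫⁻ t in Ioc (0:ℝ) x, (∫⁻ s in Ioi t, h s) * u t)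
            ≤ c₂ * Uint u x * (∫⁻ t in Ioi (0:ℝ), h t * Uint u t / (Uint u x + Uint u t)) := by
  refine ⟨1, 2, one_pos, ENNReal.one_lt_top, by norm_num, by norm_num, ?_⟩
  intro h hh x hx
  have hUx : Uint u x ≠ ∞ := (hUfin x hx).ne
  have hkey := copson_key u h hu hh x
  have hmin : ∀ s, Uint u (min x s) = min (Uint u x) (Uint u s) := fun s =>
    (Uint_mono u).map_min
  constructor
  · calc 1 * Uint u x * (∫⁻ t in Ioi (0:ℝ), h t * Uint u t / (Uint u x + Uint u t))
        = ∫⁻ t in Ioi (0:ℝ), Uint u x * (h t * Uint u t / (Uint u x + Uint u t)) := by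
          rw [one_mul, ← lintegral_const_mul' _ _ hUx]
      _ ≤ ∫⁻ t in Ioi (0:ℝ), h t * Uint u (min x t) := by
          refine lintegral_mono fun t => ?_
          rw [hmin t]
          calc Uint u x * (h t * Uint u t / (Uint u x + Uint u t))
              = h t * (Uint u x * Uint u t / (Uint u x + Uint u t)) := by
                rw [div_eq_mul_inv, div_eq_mul_inv]; ring
            _ ≤ h t * min (Uint u x) (Uint u t) := mul_le_mul_right (harm_le_min _ _) _
      _ = ∫⁻ t in Ioc (0:ℝ) x, (∫⁻ s in Ioi t, h s) * u t := hkey.symm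
  · calc (∫⁻ t in Ioc (0:ℝ) x, (∫⁻ s in Ioi t, h s) * u t)
        = ∫⁻ t in Ioi (0:ℝ), h t * Uint u (min x t) := hkey
      _ ≤ ∫⁻ t in Ioi (0:ℝ),
            2 * (Uint u x * (h t * Uint u t / (Uint u x + Uint u t))) := by
          refine lintegral_mono_ae ?_
          filter_upwards [ae_restrict_mem measurableSet_Ioi] with t ht
          have hbt : Uint u t ≠ ∞ := (hUfin t ht).ne
          rw [hmin t]
          calc h t * min (Uint u x) (Uint u t)
              ≤ h t * (2 * (Uint u x * Uint u t / (Uint u x + Uint u t))) :=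
                mul_le_mul_right (min_le_harm _ _ hUx hbt) _
            _ = 2 * (Uint u x * (h t * Uint u t / (Uint u x + Uint u t))) := by
                rw [div_eq_mul_inv, div_eq_mul_inv]; ring
      _ = 2 * Uint u x * (∫⁻ t in Ioi (0:ℝ), h t * Uint u t / (Uint u x + Uint u t)) := by
          rw [lintegral_const_mul' 2 _ (by norm_num),
            lintegral_const_mul' _ _ hUx, mul_assoc]
end

section
/- Let 0 < β ≤ ∞ and let T : M⁺ → M⁺ satisfy the quasilinearity conditions (i)–(iii). Let v, w be weights with V(x) = ∫₀ˣ v < ∞ for all x > 0. Then the inequality ‖T(∫₀ˣ h)‖_{L^β(w)} ≤ C ∫₀^∞ h(t) V(t)^{-1} dt for all nonnegative measurable h holds if and only if ‖T(f·V²)‖_{L^β(w)} ≤ C' ∫₀^∞ f(t) v(t) dt for all nonnegative nonincreasing f. -/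
open MeasureTheory ENNReal Set
open scoped ENNReal

/-- The weighted Lebesgue "norm" `‖f‖_{β,w,(0,∞)}` with `β ∈ (0,∞]`. -/
noncomputable def Lnorm (β : ℝ≥0∞) (w f : ℝ → ℝ≥0∞) : ℝ≥0∞ :=
  if β = ∞ then essSup (fun x => f x * w x) (volume.restrict (Ioi (0:ℝ)))
  else (∫⁻ x in Ioi (0:ℝ), f x ^ β.toReal * w x) ^ (1 / β.toReal)


noncomputable def Vf (v : ℝ → ℝ≥0∞) : ℝ → ℝ≥0∞ := fun x => ∫⁻ τ in Ioc (0:ℝ) x, v τ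

lemma Vf_mono (v : ℝ → ℝ≥0∞) : Monotone (Vf v) := fun _ _ hab =>
  lintegral_mono_set (Ioc_subset_Ioc_right hab)

lemma Vf_meas (v : ℝ → ℝ≥0∞) : Measurable (Vf v) := (Vf_mono v).measurable

lemma Vf_le_of_lt (v : ℝ → ℝ≥0∞) {s : ℝ} {d : ℝ≥0∞}
    (h : ∀ y, 0 < y → y < s → Vf v y ≤ d) : Vf v s ≤ d := by
  rcases le_or_gt s 0 with hs | hs
  · simp [Vf, Ioc_eq_empty_of_le hs]
  have h1 : Vf v s = ∫⁻ τ in Ioo (0:ℝ) s, v τ :=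
    (setLIntegral_congr (Ioo_ae_eq_Ioc (a := (0:ℝ)) (b := s))).symm
  rw [h1]
  have hmono : Monotone (fun n : ℕ => s - 1/((n:ℝ)+1)) := by
    intro m n hmn
    have h1 : ((m:ℝ)+1) ≤ (n:ℝ)+1 := by exact_mod_cast Nat.succ_le_succ hmn
    have := one_div_le_one_div_of_le (by positivity : (0:ℝ) < (m:ℝ)+1) h1
    simp only; linarith
  have hU : Ioo (0:ℝ) s = ⋃ n : ℕ, Ioc (0:ℝ) (s - 1/(n+1)) := by
    ext y
    simp only [mem_Ioo, mem_iUnion, mem_Ioc]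
    constructor
    · rintro ⟨hy0, hys⟩
      obtain ⟨n, hn⟩ := exists_nat_one_div_lt (show (0:ℝ) < s - y by linarith)
      exact ⟨n, hy0, by push_cast at hn ⊢; linarith⟩
    · rintro ⟨n, hy0, hy⟩
      refine ⟨hy0, lt_of_le_of_lt hy ?_⟩
      have : (0:ℝ) < 1/(n+1) := by positivity
      linarith
  rw [hU]
  have key : ∀ A : Set ℝ, MeasurableSet A → (∫⁻ τ in A, v τ) = volume.withDensity v A := by
    intro A hA; rw [withDensity_apply v hA]
  calc ∫⁻ τ in ⋃ n : ℕ, Ioc (0:ℝ) (s - 1/(n+1)), v τ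
      = ⨆ n : ℕ, ∫⁻ τ in Ioc (0:ℝ) (s - 1/(n+1)), v τ := by
        rw [key _ (MeasurableSet.iUnion fun n => measurableSet_Ioc)]
        rw [Directed.measure_iUnion]
        · exact (iSup_congr fun n => (key _ measurableSet_Ioc).symm)
        · intro m n
          rcases le_total m n with hmn | hmn
          · exact ⟨n, Ioc_subset_Ioc_right (hmono hmn), subset_rfl⟩
          · exact ⟨m, subset_rfl, Ioc_subset_Ioc_right (hmono hmn)⟩
    _ ≤ d := by
        apply iSup_le
        intro n
        rcases le_or_gt (s - 1/((n:ℝ)+1)) 0 with hn0 | hn0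
        · rw [show Ioc (0:ℝ) (s - 1/((n:ℝ)+1)) = ∅ from Ioc_eq_empty_of_le hn0]
          simp
        · refine h _ hn0 ?_
          have : (0:ℝ) < 1/((n:ℝ)+1) := by positivity
          linarith

lemma sublevel (v : ℝ → ℝ≥0∞) (hv : Measurable v) (d : ℝ≥0∞) :
    (∫⁻ x in Ioi (0:ℝ) ∩ Vf v ⁻¹' (Iio d), v x) ≤ d := by
  set S : Set ℝ := Ioi (0:ℝ) ∩ Vf v ⁻¹' (Iio d) with hSdef
  have hSm : MeasurableSet S := measurableSet_Ioi.inter ((Vf_meas v) measurableSet_Iio)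
  have key : ∀ A : Set ℝ, MeasurableSet A → (∫⁻ τ in A, v τ) = volume.withDensity v A := by
    intro A hA; rw [withDensity_apply v hA]
  rw [key S hSm]
  have hU : S = ⋃ n : ℕ, S ∩ Iic (n:ℝ) := by
    ext y; simp only [mem_iUnion, mem_inter_iff, mem_Iic]
    constructor
    · intro hy
      obtain ⟨n, hn⟩ := exists_nat_ge y
      exact ⟨n, hy, hn⟩
    · rintro ⟨n, hy, _⟩; exact hy
  rw [hU, Directed.measure_iUnion]
  · apply iSup_le
    intro n
    rcases eq_empty_or_nonempty (S ∩ Iic (n:ℝ)) with he | hne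
    · simp [he]
    · set s : ℝ := sSup (S ∩ Iic (n:ℝ)) with hs
      have hbdd : BddAbove (S ∩ Iic (n:ℝ)) := ⟨n, fun y hy => hy.2⟩
      have hsub : S ∩ Iic (n:ℝ) ⊆ Ioc 0 s := fun y hy =>
        ⟨hy.1.1, le_csSup hbdd hy⟩
      calc volume.withDensity v (S ∩ Iic (n:ℝ)) ≤ volume.withDensity v (Ioc 0 s) :=
            measure_mono hsub
        _ = Vf v s := (key _ measurableSet_Ioc).symm
        _ ≤ d := by
            apply Vf_le_of_lt
            intro y hy0 hys
            obtain ⟨z, hz, hyz⟩ := exists_lt_of_lt_csSup hne hys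
            exact le_of_lt (lt_of_le_of_lt (Vf_mono v hyz.le) hz.1.2)
  · intro m n
    rcases le_total m n with hmn | hmn
    · exact ⟨n, inter_subset_inter_right _ (Iic_subset_Iic.2 (by exact_mod_cast hmn)), subset_rfl⟩
    · exact ⟨m, subset_rfl, inter_subset_inter_right _ (Iic_subset_Iic.2 (by exact_mod_cast hmn))⟩

lemma dyadic (v : ℝ → ℝ≥0∞) (hv : Measurable v)
    (hVfin : ∀ x > (0:ℝ), Vf v x < ∞) {t : ℝ} (ht : 0 < t) (h0 : 0 < Vf v t) :
    (∫⁻ x in Ioi t, ((Vf v x)^2)⁻¹ * v x) ≤ 4 * (Vf v t)⁻¹ := by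
  set c := Vf v t with hc
  have hc0 : c ≠ 0 := h0.ne'
  have hct : c ≠ ∞ := (hVfin t ht).ne
  set E : ℕ → Set ℝ := fun k => Ioi t ∩ Vf v ⁻¹' (Ico (2^k * c) (2^(k+1) * c)) with hE
  have hEm : ∀ k, MeasurableSet (E k) := fun k =>
    measurableSet_Ioi.inter ((Vf_meas v) measurableSet_Ico)
  have hcover : Ioi t ⊆ ⋃ k, E k := by
    intro x hx
    have hxt : t < x := hx
    have hcx : c ≤ Vf v x := Vf_mono v hxt.le
    have hxfin : Vf v x ≠ ∞ := (hVfin x (ht.trans hxt)).ne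
    have hP : ∃ n : ℕ, Vf v x < 2^(n+1) * c := by
      obtain ⟨n, hn⟩ := ENNReal.exists_nat_gt (show Vf v x / c ≠ ∞ by
        simp only [ne_eq, ENNReal.div_eq_top]; tauto)
      refine ⟨n, ?_⟩
      have h1 : Vf v x < n * c := by
        rw [← ENNReal.div_lt_iff (Or.inl hc0) (Or.inl hct)]
        exact hn
      have h2 : (n : ℝ≥0∞) ≤ 2^(n+1) := by
        calc (n : ℝ≥0∞) ≤ ((2^(n+1) : ℕ) : ℝ≥0∞) := by
              exact_mod_cast (Nat.lt_two_pow_self (n := n)).le.trans (Nat.pow_le_pow_right (by norm_num) (Nat.le_succ n))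
          _ = 2^(n+1) := by push_cast; rfl
      exact h1.trans_le (mul_le_mul_left h2 c)
    classical
    refine mem_iUnion.2 ⟨Nat.find hP, hx, ?_, Nat.find_spec hP⟩
    rcases Nat.eq_zero_or_eq_succ_pred (Nat.find hP) with h | h
    · rw [h]; simpa using hcx
    · rw [h]
      have := Nat.find_min hP (m := Nat.find hP - 1) (by omega)
      have h1 : Nat.find hP - 1 + 1 = Nat.find hP := by omega
      rw [Nat.succ_eq_add_one, Nat.pred_eq_sub_one, h1]
      exact not_lt.1 (by rwa [h1] at this)
  calc (∫⁻ x in Ioi t, ((Vf v x)^2)⁻¹ * v x)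
      ≤ ∫⁻ x in ⋃ k, E k, ((Vf v x)^2)⁻¹ * v x := lintegral_mono_set hcover
    _ ≤ ∑' k, ∫⁻ x in E k, ((Vf v x)^2)⁻¹ * v x := lintegral_iUnion_le _ _
    _ ≤ ∑' k, (2 * c⁻¹) * (2⁻¹)^k := by
        apply ENNReal.tsum_le_tsum
        intro k
        have h2k0 : ((2:ℝ≥0∞)^k) ≠ 0 := pow_ne_zero k (by norm_num)
        have h2kt : ((2:ℝ≥0∞)^k) ≠ ∞ := ENNReal.pow_ne_top (by norm_num)
        have step1 : (∫⁻ x in E k, ((Vf v x)^2)⁻¹ * v x)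
            ≤ ∫⁻ x in E k, ((2^k * c)^2)⁻¹ * v x := by
          apply lintegral_mono_ae
          refine (ae_restrict_iff' (hEm k)).2 (ae_of_all _ ?_)
          intro x hx
          have hlow : 2^k * c ≤ Vf v x := hx.2.1
          exact mul_le_mul_left (ENNReal.inv_le_inv.2 (pow_le_pow_left' hlow 2)) _
        have step2 : (∫⁻ x in E k, ((2^k * c)^2)⁻¹ * v x)
            = ((2^k * c)^2)⁻¹ * ∫⁻ x in E k, v x := lintegral_const_mul _ hv
        have step3 : (∫⁻ x in E k, v x) ≤ 2^(k+1) * c := by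
          refine le_trans (lintegral_mono_set ?_) (sublevel v hv (2^(k+1) * c))
          intro x hx
          exact ⟨lt_trans ht hx.1, hx.2.2⟩
        have hmc0 : (2:ℝ≥0∞)^k * c ≠ 0 := mul_ne_zero h2k0 hc0
        have hmct : (2:ℝ≥0∞)^k * c ≠ ∞ := ENNReal.mul_ne_top h2kt hct
        have step4 : ((2^k * c)^2)⁻¹ * (2^(k+1) * c) = (2 * c⁻¹) * (2⁻¹)^k := by
          rw [sq, pow_succ, ENNReal.mul_inv (Or.inl hmc0) (Or.inl hmct)]
          rw [show (2:ℝ≥0∞)^k * 2 * c = 2 * (2^k * c) by ring]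
          rw [mul_assoc ((2^k*c)⁻¹) _ _, show (2^k*c)⁻¹ * (2 * (2^k * c)) = 2 * ((2^k*c)⁻¹ * (2^k * c)) by ring]
          rw [ENNReal.inv_mul_cancel hmc0 hmct, mul_one]
          rw [ENNReal.mul_inv (Or.inl h2k0) (Or.inl h2kt), ← ENNReal.inv_pow]
          ring
        calc (∫⁻ x in E k, ((Vf v x)^2)⁻¹ * v x)
            ≤ ((2^k * c)^2)⁻¹ * ∫⁻ x in E k, v x := step1.trans step2.le
          _ ≤ ((2^k * c)^2)⁻¹ * (2^(k+1) * c) := mul_le_mul_right step3 _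
          _ = (2 * c⁻¹) * (2⁻¹)^k := step4
    _ = 4 * c⁻¹ := by
        rw [ENNReal.tsum_mul_left, ENNReal.tsum_geometric, ENNReal.one_sub_inv_two, inv_inv]
        ring

lemma square (v : ℝ → ℝ≥0∞) (hv : Measurable v) (x : ℝ) :
    (Vf v x)^2 ≤ 2 * ∫⁻ t in Ioc (0:ℝ) x, v t * Vf v t := by
  set μ := volume.restrict (Ioc (0:ℝ) x) with hμ
  have h1 : (Vf v x)^2 = ∫⁻ p : ℝ×ℝ, v p.1 * v p.2 ∂(μ.prod μ) := by
    rw [lintegral_prod_mul hv.aemeasurable hv.aemeasurable, sq]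
    rfl
  set A : ℝ×ℝ → ℝ≥0∞ := fun p => if p.1 ≤ p.2 then v p.1 * v p.2 else 0 with hA
  set B : ℝ×ℝ → ℝ≥0∞ := fun p => if p.2 ≤ p.1 then v p.1 * v p.2 else 0 with hB
  have hAm : Measurable A :=
    Measurable.ite (measurableSet_le measurable_fst measurable_snd)
      ((hv.comp measurable_fst).mul (hv.comp measurable_snd)) measurable_const
  have hBm : Measurable B :=
    Measurable.ite (measurableSet_le measurable_snd measurable_fst)
      ((hv.comp measurable_fst).mul (hv.comp measurable_snd)) measurable_const
  have hpt : ∀ p : ℝ×ℝ, v p.1 * v p.2 ≤ A p + B p := by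
    intro p
    rcases le_total p.1 p.2 with h | h
    · simp only [hA, hB, if_pos h]; exact le_add_right (le_refl _)
    · simp only [hA, hB, if_pos h]; exact le_add_left (le_refl _)
  have hIA : (∫⁻ p, A p ∂(μ.prod μ)) ≤ ∫⁻ t in Ioc (0:ℝ) x, v t * Vf v t := by
    rw [lintegral_prod_symm A hAm.aemeasurable]
    apply lintegral_mono
    intro t
    show (∫⁻ s, A (s, t) ∂μ) ≤ v t * Vf v t
    have : (fun s => A (s, t)) = fun s => (if s ≤ t then v s else 0) * v t := by
      funext s
      by_cases h : s ≤ t <;> simp [hA, h]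
    rw [this, lintegral_mul_const _ (Measurable.ite measurableSet_Iic hv measurable_const)]
    rw [mul_comm]
    apply mul_le_mul_right
    have : (∫⁻ s, (if s ≤ t then v s else 0) ∂μ) = ∫⁻ s in Iic t, v s ∂μ := by
      rw [← lintegral_indicator measurableSet_Iic]
      congr 1
    rw [this, hμ, Measure.restrict_restrict measurableSet_Iic]
    exact lintegral_mono_set (fun s hs => ⟨hs.2.1, hs.1⟩)
  have hIB : (∫⁻ p, B p ∂(μ.prod μ)) ≤ ∫⁻ t in Ioc (0:ℝ) x, v t * Vf v t := by
    rw [lintegral_prod B hBm.aemeasurable]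
    apply lintegral_mono
    intro s
    show (∫⁻ t, B (s, t) ∂μ) ≤ v s * Vf v s
    have : (fun t => B (s, t)) = fun t => v s * (if t ≤ s then v t else 0) := by
      funext t
      by_cases h : t ≤ s <;> simp [hB, h]
    rw [this, lintegral_const_mul _ (Measurable.ite measurableSet_Iic hv measurable_const)]
    apply mul_le_mul_right
    have : (∫⁻ t, (if t ≤ s then v t else 0) ∂μ) = ∫⁻ t in Iic s, v t ∂μ := by
      rw [← lintegral_indicator measurableSet_Iic]
      congr 1
    rw [this, hμ, Measure.restrict_restrict measurableSet_Iic]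
    exact lintegral_mono_set (fun t ht => ⟨ht.2.1, ht.1⟩)
  calc (Vf v x)^2 = ∫⁻ p : ℝ×ℝ, v p.1 * v p.2 ∂(μ.prod μ) := h1
    _ ≤ ∫⁻ p : ℝ×ℝ, (A p + B p) ∂(μ.prod μ) := lintegral_mono hpt
    _ = (∫⁻ p, A p ∂(μ.prod μ)) + ∫⁻ p, B p ∂(μ.prod μ) := lintegral_add_left hAm _
    _ ≤ (∫⁻ t in Ioc (0:ℝ) x, v t * Vf v t) + ∫⁻ t in Ioc (0:ℝ) x, v t * Vf v t :=
        add_le_add hIA hIB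
    _ = 2 * ∫⁻ t in Ioc (0:ℝ) x, v t * Vf v t := (two_mul _).symm

lemma Lnorm_le_mul {β : ℝ≥0∞} (hβ : 0 < β) (w g₁ g₂ : ℝ → ℝ≥0∞) {a : ℝ≥0∞} (ha : a ≠ ∞)
    (h : ∀ᵐ x ∂(volume.restrict (Ioi (0:ℝ))), g₁ x ≤ a * g₂ x) :
    Lnorm β w g₁ ≤ a * Lnorm β w g₂ := by
  unfold Lnorm
  split_ifs with hβinf
  · calc essSup (fun x => g₁ x * w x) (volume.restrict (Ioi (0:ℝ)))
        ≤ essSup (fun x => a * (g₂ x * w x)) (volume.restrict (Ioi (0:ℝ))) :=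
          essSup_mono_ae (h.mono fun x hx => by
            show g₁ x * w x ≤ a * (g₂ x * w x)
            rw [← mul_assoc]; exact mul_le_mul_left hx _)
      _ = a * essSup (fun x => g₂ x * w x) (volume.restrict (Ioi (0:ℝ))) :=
          ENNReal.essSup_const_mul
  · have hp : 0 < β.toReal := ENNReal.toReal_pos hβ.ne' hβinf
    calc (∫⁻ x in Ioi (0:ℝ), g₁ x ^ β.toReal * w x) ^ (1/β.toReal)
        ≤ (∫⁻ x in Ioi (0:ℝ), (a * g₂ x) ^ β.toReal * w x) ^ (1/β.toReal) := by
          apply ENNReal.rpow_le_rpow _ (by positivity)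
          exact lintegral_mono_ae (h.mono fun x hx =>
            mul_le_mul_left (ENNReal.rpow_le_rpow hx hp.le) _)
      _ = ((a ^ β.toReal) * ∫⁻ x in Ioi (0:ℝ), g₂ x ^ β.toReal * w x) ^ (1/β.toReal) := by
          congr 1
          rw [← lintegral_const_mul' _ _ (ENNReal.rpow_ne_top_of_nonneg hp.le ha)]
          congr 1; funext x
          rw [ENNReal.mul_rpow_of_nonneg _ _ hp.le, mul_assoc]
      _ = a * (∫⁻ x in Ioi (0:ℝ), g₂ x ^ β.toReal * w x) ^ (1/β.toReal) := by
          rw [ENNReal.mul_rpow_of_nonneg _ _ (by positivity : (0:ℝ) ≤ 1/β.toReal)]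
          congr 1
          rw [← ENNReal.rpow_mul, mul_one_div_cancel hp.ne', ENNReal.rpow_one]

/-- The `s = 1` reduction theorem (Theorem 3.5):
`‖T(∫₀ˣ h)‖_{β,w} ≤ C ∫₀^∞ h V⁻¹` for all nonnegative measurable `h` iff
`‖T(f·V²)‖_{β,w} ≤ C' ∫₀^∞ f v` for all nonnegative nonincreasing `f`. -/
theorem reduction_TH_s_eq_one (β : ℝ≥0∞) (hβ : 0 < β)
    (T : (ℝ → ℝ≥0∞) → ℝ → ℝ≥0∞)
    (hT1 : ∀ (a : ℝ≥0∞) (f : ℝ → ℝ≥0∞), T (fun x => a * f x) = fun x => a * T f x)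
    (hT2 : ∃ c : ℝ≥0∞, 0 < c ∧ c < ∞ ∧ ∀ f g : ℝ → ℝ≥0∞,
      (∀ᵐ x ∂(volume.restrict (Ioi (0:ℝ))), f x ≤ g x) →
      ∀ᵐ x ∂(volume.restrict (Ioi (0:ℝ))), T f x ≤ c * T g x)
    (hT3 : ∃ c : ℝ≥0∞, 0 < c ∧ c < ∞ ∧ ∀ (f : ℝ → ℝ≥0∞) (a : ℝ≥0∞),
      ∀ᵐ x ∂(volume.restrict (Ioi (0:ℝ))),
        T (fun y => f y + a) x ≤ c * (T f x + a * T (fun _ => 1) x))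
    (v w : ℝ → ℝ≥0∞) (hv : Measurable v) (hw : Measurable w)
    (hVfin : ∀ x > (0:ℝ), (∫⁻ t in Ioc (0:ℝ) x, v t) < ∞) :
    (∃ C : ℝ≥0∞, C < ∞ ∧ ∀ h : ℝ → ℝ≥0∞, Measurable h →
        Lnorm β w (T (fun x => ∫⁻ τ in Ioc (0:ℝ) x, h τ))
          ≤ C * ∫⁻ t in Ioi (0:ℝ), h t / (∫⁻ τ in Ioc (0:ℝ) t, v τ))
    ↔ (∃ C : ℝ≥0∞, C < ∞ ∧ ∀ f : ℝ → ℝ≥0∞, AntitoneOn f (Ioi (0:ℝ)) →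
        Lnorm β w (T (fun x => f x * (∫⁻ τ in Ioc (0:ℝ) x, v τ) ^ (2:ℕ)))
          ≤ C * ∫⁻ t in Ioi (0:ℝ), f t * v t) := by
  obtain ⟨c₂, hc₂0, hc₂t, hc₂⟩ := hT2
  have hVfin' : ∀ x > (0:ℝ), Vf v x < ∞ := hVfin
  constructor
  · -- forward
    rintro ⟨C, hC, H1⟩
    refine ⟨c₂ * 2 * C, ENNReal.mul_lt_top (ENNReal.mul_lt_top hc₂t (by norm_num)) hC, ?_⟩
    intro f hf
    set F : ℝ → ℝ≥0∞ := fun t => ⨆ (s : ℝ) (_ : 0 < s ∧ t < s), f s with hFdef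
    have hFanti : Antitone F := by
      intro t₁ t₂ h12
      refine iSup_le fun s => iSup_le fun hs => ?_
      exact le_iSup_of_le s (le_iSup_of_le ⟨hs.1, h12.trans_lt hs.2⟩ (le_refl _))
    have hFmeas : Measurable F := hFanti.measurable
    have hFle : ∀ t, t ∈ Ioi (0:ℝ) → F t ≤ f t := by
      intro t ht
      refine iSup_le fun s => iSup_le fun hs => ?_
      exact hf ht (mem_Ioi.2 hs.1) hs.2.le
    have hfleF : ∀ t y : ℝ, 0 < y → t < y → f y ≤ F t := by
      intro t y hy0 hty
      exact le_iSup_of_le y (le_iSup_of_le ⟨hy0, hty⟩ (le_refl _))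
    set h : ℝ → ℝ≥0∞ := fun t => F t * (v t * Vf v t) with hhdef
    have hhm : Measurable h := hFmeas.mul (hv.mul (Vf_meas v))
    set H : ℝ → ℝ≥0∞ := fun y => ∫⁻ τ in Ioc (0:ℝ) y, h τ with hHdef
    have key1 : ∀ y, y ∈ Ioi (0:ℝ) → f y * (Vf v y)^2 ≤ 2 * H y := by
      intro y hy
      have hy0 : (0:ℝ) < y := hy
      calc f y * (Vf v y)^2
          ≤ f y * (2 * ∫⁻ t in Ioc (0:ℝ) y, v t * Vf v t) :=
            mul_le_mul_right (square v hv y) _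
        _ = 2 * ∫⁻ t in Ioc (0:ℝ) y, f y * (v t * Vf v t) := by
            rw [lintegral_const_mul _ (f := fun t => v t * Vf v t) (hv.mul (Vf_meas v))]; ring
        _ ≤ 2 * H y := by
            apply mul_le_mul_right
            apply lintegral_mono_ae
            have hy_ne : ∀ᵐ t ∂volume.restrict (Ioc (0:ℝ) y), t ≠ y := by
              rw [ae_iff]
              have hset : {t : ℝ | ¬ t ≠ y} = {y} := by ext t; simp
              rw [hset]
              exact le_antisymm
                (le_trans (Measure.le_iff'.1 Measure.restrict_le_self {y})
                  (le_of_eq Real.volume_singleton)) zero_le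
            filter_upwards [hy_ne, ae_restrict_mem measurableSet_Ioc] with t htne htmem
            exact mul_le_mul_left (hfleF t y hy0 (lt_of_le_of_ne htmem.2 htne)) _
    have hT2app := hc₂ (fun y => f y * (Vf v y)^2) (fun y => 2 * H y)
      ((ae_restrict_mem measurableSet_Ioi).mono key1)
    have hT2app' : ∀ᵐ x ∂(volume.restrict (Ioi (0:ℝ))),
        T (fun y => f y * (Vf v y)^2) x ≤ (c₂ * 2) * T H x := by
      filter_upwards [hT2app] with x hx
      calc T (fun y => f y * (Vf v y)^2) x ≤ c₂ * T (fun y => 2 * H y) x := hx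
        _ = (c₂ * 2) * T H x := by rw [hT1 2 H, mul_assoc]
    calc Lnorm β w (T (fun x => f x * (∫⁻ τ in Ioc (0:ℝ) x, v τ) ^ (2:ℕ)))
        ≤ (c₂ * 2) * Lnorm β w (T H) :=
          Lnorm_le_mul hβ w _ _ (ENNReal.mul_ne_top hc₂t.ne (by norm_num)) hT2app'
      _ ≤ (c₂ * 2) * (C * ∫⁻ t in Ioi (0:ℝ), h t / (∫⁻ τ in Ioc (0:ℝ) t, v τ)) :=
          mul_le_mul_right (H1 h hhm) _
      _ ≤ (c₂ * 2) * (C * ∫⁻ t in Ioi (0:ℝ), f t * v t) := by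
          apply mul_le_mul_right
          apply mul_le_mul_right
          apply lintegral_mono_ae
          filter_upwards [ae_restrict_mem measurableSet_Ioi] with t ht
          calc h t / (∫⁻ τ in Ioc (0:ℝ) t, v τ)
              = (F t * v t) * (Vf v t / Vf v t) := by
                rw [hhdef]; simp only []
                rw [← mul_assoc, mul_div_assoc]
                rfl
            _ ≤ (F t * v t) * 1 := mul_le_mul_right ENNReal.div_self_le_one _
            _ = F t * v t := mul_one _
            _ ≤ f t * v t := mul_le_mul_left (hFle t ht) _
      _ = c₂ * 2 * C * ∫⁻ t in Ioi (0:ℝ), f t * v t := by ring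
  · -- backward
    rintro ⟨C, hC, H2⟩
    refine ⟨c₂ * (5 * C) + 1, ?_, ?_⟩
    · exact ENNReal.add_lt_top.2 ⟨ENNReal.mul_lt_top hc₂t
        (ENNReal.mul_lt_top (by norm_num) hC), ENNReal.one_lt_top⟩
    intro h hh
    set N : Set ℝ := {t : ℝ | 0 < t ∧ Vf v t = 0 ∧ h t ≠ 0} with hNdef
    have hNmeas : MeasurableSet N := by
      have : N = (Ioi (0:ℝ) ∩ Vf v ⁻¹' {0}) ∩ (h ⁻¹' {0})ᶜ := by
        ext t; simp [hNdef, and_assoc]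
      rw [this]
      exact (measurableSet_Ioi.inter ((Vf_meas v) (measurableSet_singleton 0))).inter
        ((hh (measurableSet_singleton 0)).compl)
    by_cases hN : volume N = 0
    · -- good case
      have hNae : ∀ᵐ t ∂(volume : Measure ℝ), t ∉ N := measure_eq_zero_iff_ae_notMem.mp hN
      set F : ℝ → ℝ≥0∞ := fun x => ∫⁻ t in Ioi (0:ℝ), h t * ((max (Vf v t) (Vf v x))^2)⁻¹
        with hFdef
      have hFanti : AntitoneOn F (Ioi (0:ℝ)) := by
        intro x _ y _ hxy
        apply lintegral_mono
        intro t
        exact mul_le_mul_right (ENNReal.inv_le_inv.2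
          (pow_le_pow_left' (max_le_max (le_refl _) (Vf_mono v hxy)) 2)) _
      have keyA : ∀ x, x ∈ Ioi (0:ℝ) → (∫⁻ τ in Ioc (0:ℝ) x, h τ) ≤ F x * (Vf v x)^2 := by
        intro x hx
        by_cases hVx : Vf v x = 0
        · have h0 : ∀ᵐ τ ∂volume.restrict (Ioc (0:ℝ) x), h τ = 0 := by
            rw [ae_restrict_iff' measurableSet_Ioc]
            filter_upwards [hNae] with τ hτ hmem
            by_contra hne
            exact hτ ⟨hmem.1, le_antisymm (hVx ▸ Vf_mono v hmem.2) zero_le, hne⟩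
          calc (∫⁻ τ in Ioc (0:ℝ) x, h τ) = ∫⁻ _ in Ioc (0:ℝ) x, 0 := lintegral_congr_ae h0
            _ = 0 := lintegral_zero
            _ ≤ F x * (Vf v x)^2 := zero_le
        · have hVxt : Vf v x ≠ ∞ := (hVfin' x hx).ne
          have h1 : (∫⁻ τ in Ioc (0:ℝ) x, h τ) * ((Vf v x)^2)⁻¹ ≤ F x := by
            calc (∫⁻ τ in Ioc (0:ℝ) x, h τ) * ((Vf v x)^2)⁻¹
                = ∫⁻ τ in Ioc (0:ℝ) x, h τ * ((Vf v x)^2)⁻¹ :=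
                  (lintegral_mul_const' _ _
                    (ENNReal.inv_ne_top.2 (pow_ne_zero 2 hVx))).symm
              _ = ∫⁻ τ in Ioc (0:ℝ) x, h τ * ((max (Vf v τ) (Vf v x))^2)⁻¹ := by
                  apply setLIntegral_congr_fun measurableSet_Ioc
                  intro τ hτ; beta_reduce
                  rw [max_eq_right (Vf_mono v hτ.2)]
              _ ≤ F x := lintegral_mono_set (fun τ hτ => hτ.1)
          calc (∫⁻ τ in Ioc (0:ℝ) x, h τ)
              = ((∫⁻ τ in Ioc (0:ℝ) x, h τ) * ((Vf v x)^2)⁻¹) * (Vf v x)^2 := by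
                rw [mul_assoc, ENNReal.inv_mul_cancel (pow_ne_zero 2 hVx)
                  (ENNReal.pow_ne_top hVxt), mul_one]
            _ ≤ F x * (Vf v x)^2 := mul_le_mul_left h1 _
      have keyB : (∫⁻ x in Ioi (0:ℝ), F x * v x)
          ≤ 5 * ∫⁻ t in Ioi (0:ℝ), h t / (∫⁻ τ in Ioc (0:ℝ) t, v τ) := by
        have hswap : (∫⁻ x in Ioi (0:ℝ), F x * v x)
            = ∫⁻ t in Ioi (0:ℝ), ∫⁻ x in Ioi (0:ℝ),
                h t * ((max (Vf v t) (Vf v x))^2)⁻¹ * v x := by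
          have e1 : ∀ x : ℝ, F x * v x
              = ∫⁻ t in Ioi (0:ℝ), h t * ((max (Vf v t) (Vf v x))^2)⁻¹ * v x := by
            intro x
            rw [hFdef]
            exact (lintegral_mul_const _
              (hh.mul ((((Vf_meas v).max measurable_const).pow_const 2).inv))).symm
          rw [lintegral_congr e1]
          exact lintegral_lintegral_swap
            ((((hh.comp measurable_snd).mul
              ((((Vf_meas v).comp measurable_snd).max
                ((Vf_meas v).comp measurable_fst)).pow_const 2).inv).mul
              (hv.comp measurable_fst)).aemeasurable)
        rw [hswap]
        have hbound : ∀ᵐ t ∂volume.restrict (Ioi (0:ℝ)),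
            (∫⁻ x in Ioi (0:ℝ), h t * ((max (Vf v t) (Vf v x))^2)⁻¹ * v x)
              ≤ 5 * (h t / Vf v t) := by
          filter_upwards [ae_restrict_mem measurableSet_Ioi, ae_restrict_of_ae hNae]
            with t ht htN
          have hinner : (∫⁻ x in Ioi (0:ℝ), h t * ((max (Vf v t) (Vf v x))^2)⁻¹ * v x)
              = h t * ∫⁻ x in Ioi (0:ℝ), ((max (Vf v t) (Vf v x))^2)⁻¹ * v x := by
            rw [← lintegral_const_mul _ (f := fun x => ((max (Vf v t) (Vf v x))^2)⁻¹ * v x) (((measurable_const.max (Vf_meas v)).pow_const 2).inv.mul hv)]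
            congr 1; funext x; ring
          rw [hinner]
          by_cases hht : h t = 0
          · simp [hht]
          · have hVt0 : Vf v t ≠ 0 := by
              intro hz; exact htN ⟨ht, hz, hht⟩
            have hVtt : Vf v t ≠ ∞ := (hVfin' t ht).ne
            have hsplit : (∫⁻ x in Ioi (0:ℝ), ((max (Vf v t) (Vf v x))^2)⁻¹ * v x)
                ≤ 5 * (Vf v t)⁻¹ := by
              rw [← Ioc_union_Ioi_eq_Ioi (le_of_lt ht),
                lintegral_union measurableSet_Ioi (Ioc_disjoint_Ioi (le_refl t))]
              have part1 : (∫⁻ x in Ioc (0:ℝ) t, ((max (Vf v t) (Vf v x))^2)⁻¹ * v x)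
                  ≤ (Vf v t)⁻¹ := by
                have : (∫⁻ x in Ioc (0:ℝ) t, ((max (Vf v t) (Vf v x))^2)⁻¹ * v x)
                    = ∫⁻ x in Ioc (0:ℝ) t, ((Vf v t)^2)⁻¹ * v x := by
                  apply setLIntegral_congr_fun measurableSet_Ioc
                  intro x hx; beta_reduce
                  rw [max_eq_left (Vf_mono v hx.2)]
                rw [this, lintegral_const_mul _ hv]
                have : ((Vf v t)^2)⁻¹ * Vf v t = (Vf v t)⁻¹ := by
                  rw [sq, ENNReal.mul_inv (Or.inl hVt0) (Or.inl hVtt), mul_assoc,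
                    ENNReal.inv_mul_cancel hVt0 hVtt, mul_one]
                exact le_of_eq this
              have part2 : (∫⁻ x in Ioi t, ((max (Vf v t) (Vf v x))^2)⁻¹ * v x)
                  ≤ 4 * (Vf v t)⁻¹ := by
                have : (∫⁻ x in Ioi t, ((max (Vf v t) (Vf v x))^2)⁻¹ * v x)
                    = ∫⁻ x in Ioi t, ((Vf v x)^2)⁻¹ * v x := by
                  apply setLIntegral_congr_fun measurableSet_Ioi
                  intro x hx; beta_reduce
                  rw [max_eq_right (Vf_mono v (le_of_lt hx))]
                rw [this]
                exact dyadic v hv hVfin' ht (pos_iff_ne_zero.2 hVt0)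
              calc (∫⁻ x in Ioc (0:ℝ) t, ((max (Vf v t) (Vf v x))^2)⁻¹ * v x)
                    + ∫⁻ x in Ioi t, ((max (Vf v t) (Vf v x))^2)⁻¹ * v x
                  ≤ (Vf v t)⁻¹ + 4 * (Vf v t)⁻¹ := add_le_add part1 part2
                _ = 5 * (Vf v t)⁻¹ := by ring
            calc h t * ∫⁻ x in Ioi (0:ℝ), ((max (Vf v t) (Vf v x))^2)⁻¹ * v x
                ≤ h t * (5 * (Vf v t)⁻¹) := mul_le_mul_right hsplit _
              _ = 5 * (h t / Vf v t) := by rw [div_eq_mul_inv]; ring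
        calc (∫⁻ t in Ioi (0:ℝ), ∫⁻ x in Ioi (0:ℝ),
                h t * ((max (Vf v t) (Vf v x))^2)⁻¹ * v x)
            ≤ ∫⁻ t in Ioi (0:ℝ), 5 * (h t / Vf v t) := lintegral_mono_ae hbound
          _ = 5 * ∫⁻ t in Ioi (0:ℝ), h t / (∫⁻ τ in Ioc (0:ℝ) t, v τ) :=
              lintegral_const_mul' _ _ (by norm_num)
      -- assemble
      have hT2app := hc₂ (fun y => ∫⁻ τ in Ioc (0:ℝ) y, h τ) (fun y => F y * (Vf v y)^2)
        ((ae_restrict_mem measurableSet_Ioi).mono keyA)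
      calc Lnorm β w (T (fun x => ∫⁻ τ in Ioc (0:ℝ) x, h τ))
          ≤ c₂ * Lnorm β w (T (fun y => F y * (Vf v y)^2)) :=
            Lnorm_le_mul hβ w _ _ hc₂t.ne hT2app
        _ ≤ c₂ * (C * ∫⁻ t in Ioi (0:ℝ), F t * v t) :=
            mul_le_mul_right (H2 F hFanti) _
        _ ≤ c₂ * (C * (5 * ∫⁻ t in Ioi (0:ℝ), h t / (∫⁻ τ in Ioc (0:ℝ) t, v τ))) :=
            mul_le_mul_right (mul_le_mul_right keyB _) _
        _ = (c₂ * (5 * C)) * ∫⁻ t in Ioi (0:ℝ), h t / (∫⁻ τ in Ioc (0:ℝ) t, v τ) := by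
            ring
        _ ≤ (c₂ * (5 * C) + 1) * ∫⁻ t in Ioi (0:ℝ), h t / (∫⁻ τ in Ioc (0:ℝ) t, v τ) :=
            mul_le_mul_left le_self_add _
    · -- bad case
      have htop : (∫⁻ t in Ioi (0:ℝ), h t / (∫⁻ τ in Ioc (0:ℝ) t, v τ)) = ∞ := by
        refine eq_top_iff.2 ?_
        calc (∞ : ℝ≥0∞) = ∞ * volume N := (ENNReal.top_mul hN).symm
          _ = ∫⁻ _ in N, (∞:ℝ≥0∞) := (setLIntegral_const N ∞).symm
          _ = ∫⁻ t in N, h t / (∫⁻ τ in Ioc (0:ℝ) t, v τ) := by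
              refine (setLIntegral_congr_fun hNmeas (fun t htN => ?_)).symm
              show h t / Vf v t = ∞
              rw [htN.2.1]
              exact ENNReal.div_zero htN.2.2
          _ ≤ ∫⁻ t in Ioi (0:ℝ), h t / (∫⁻ τ in Ioc (0:ℝ) t, v τ) :=
              lintegral_mono_set (fun t htN => htN.1)
      rw [htop, ENNReal.mul_top (by intro hzero; simp at hzero)]
      exact le_top
end
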